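/- arXiv:2501.12310 — 5 statements merged into one kernel-verified Lean document; each statement's English description precedes it below -/
import Mathlib

section
/- Let N ≥ 2, K ≥ 2 and ε ≥ 0. Set α = (D^TSC(ε) - 1)·(N-1), where D^TSC(ε) = 1 + ((e^ε+N-1)^(K-1) - e^((K-1)ε)) / ((N-1)·(e^ε+N-1)^(K-1)). Then α ≤ (K-1)(N-1)/(e^ε + N - 1). -/
theorem alpha_bound (N K : ℕ) (hN : 2 ≤ N) (hK : 2 ≤ K) (ε : ℝ) (hε : 0 ≤ ε) :
    let D : ℝ := 1 + ((Real.exp ε + N - 1) ^ (K - 1) - Real.exp (((K : ℝ) - 1) * ε)) /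
        (((N : ℝ) - 1) * (Real.exp ε + N - 1) ^ (K - 1))
    (D - 1) * ((N : ℝ) - 1) ≤ ((K : ℝ) - 1) * ((N : ℝ) - 1) / (Real.exp ε + N - 1) := by
  intro D
  have hN2 : (2:ℝ) ≤ (N:ℝ) := by exact_mod_cast hN
  have hexp : (1:ℝ) ≤ Real.exp ε := Real.one_le_exp hε
  set s : ℝ := Real.exp ε + N - 1 with hs
  have hspos : 0 < s := by rw [hs]; linarith
  have hNpos : (0:ℝ) < (N:ℝ) - 1 := by linarith
  have hcast : ((K - 1 : ℕ) : ℝ) = (K:ℝ) - 1 := by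
    have h1 : 1 ≤ K := by omega
    push_cast [h1]; ring
  have hE : Real.exp (((K : ℝ) - 1) * ε) = (Real.exp ε) ^ (K - 1) := by
    rw [← hcast, Real.exp_nat_mul]
  -- Bernoulli
  have key : 1 + ((K:ℝ) - 1) * (-((((N:ℝ) - 1)) / s)) ≤ (1 + (-((((N:ℝ) - 1)) / s))) ^ (K - 1) := by
    have := one_add_mul_le_pow (a := -((((N:ℝ) - 1)) / s)) (by
      have : ((N:ℝ) - 1) / s ≤ 1 := by
        rw [div_le_one hspos]; rw [hs]; linarith
      linarith) (K - 1)
    rwa [hcast] at this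
  have h1x : 1 + (-((((N:ℝ) - 1)) / s)) = Real.exp ε / s := by
    field_simp
    rw [hs]; ring
  rw [h1x] at key
  have goal_eq : (D - 1) * ((N:ℝ) - 1) = 1 - (Real.exp ε / s) ^ (K - 1) := by
    simp only [D, hE]
    rw [← hs]
    rw [div_pow]
    field_simp
    ring
  rw [goal_eq]
  have : ((K:ℝ) - 1) * ((N:ℝ) - 1) / s = ((K:ℝ) - 1) * (((N:ℝ) - 1) / s) := by ring
  rw [this]
  linarith
end

section
/- Let N ≥ 2, K ≥ 2 and ε ≥ 0, and suppose D = D^TSC(ε) > 1 where D^TSC(ε) = 1 + ((e^ε+N-1)^(K-1) - e^((K-1)ε)) / ((N-1)·(e^ε+N-1)^(K-1)). Then ε ≤ log(K-1) + log((N-1)/α), where α = (D-1)(N-1); equivalently ε ≤ log((K-1)/(D-1)). -/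
lemma aux_pow_sub_pow (a b : ℝ) (hb : 0 ≤ b) (hba : b ≤ a) (n : ℕ) :
    a ^ (n + 1) - b ^ (n + 1) ≤ ((n : ℝ) + 1) * a ^ n * (a - b) := by
  induction n with
  | zero => simp
  | succ n ih =>
    have ha : 0 ≤ a := hb.trans hba
    have hbn : b ^ (n + 1) ≤ a ^ (n + 1) := pow_le_pow_left₀ hb hba _
    have h1 : a ^ (n + 2) - b ^ (n + 2)
        = a * (a ^ (n + 1) - b ^ (n + 1)) + b ^ (n + 1) * (a - b) := by ring
    have h2 : a * (a ^ (n + 1) - b ^ (n + 1)) ≤ a * (((n : ℝ) + 1) * a ^ n * (a - b)) :=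
      mul_le_mul_of_nonneg_left ih ha
    have h3 : b ^ (n + 1) * (a - b) ≤ a ^ (n + 1) * (a - b) :=
      mul_le_mul_of_nonneg_right hbn (by linarith)
    have e1 : a * (((n : ℝ) + 1) * a ^ n * (a - b)) = ((n : ℝ) + 1) * a ^ (n + 1) * (a - b) := by
      ring
    have e2 : (((n : ℕ) + 1 : ℕ) : ℝ) + 1 = ((n : ℝ) + 1) + 1 := by push_cast; ring
    rw [e2]
    have e3 : (((n : ℝ) + 1) + 1) * a ^ (n + 1) * (a - b)
        = ((n : ℝ) + 1) * a ^ (n + 1) * (a - b) + a ^ (n + 1) * (a - b) := by ring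
    rw [e1] at h2
    linarith [h1, h2, h3]

theorem epsilon_tsc_upper_bound (N K : ℕ) (hN : 2 ≤ N) (hK : 2 ≤ K) (ε : ℝ) (hε : 0 ≤ ε)
    (D : ℝ)
    (hD : D = 1 + ((Real.exp ε + N - 1) ^ (K - 1) - Real.exp (((K : ℝ) - 1) * ε)) /
        (((N : ℝ) - 1) * (Real.exp ε + N - 1) ^ (K - 1)))
    (hD1 : 1 < D) :
    ε ≤ Real.log ((K : ℝ) - 1) + Real.log (((N : ℝ) - 1) / ((D - 1) * ((N : ℝ) - 1))) ∧
    ε ≤ Real.log (((K : ℝ) - 1) / (D - 1)) := by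
  have hKc : (2 : ℝ) ≤ (K : ℝ) := by exact_mod_cast hK
  have hNc : (2 : ℝ) ≤ (N : ℝ) := by exact_mod_cast hN
  set x : ℝ := Real.exp ε + (N : ℝ) - 1 with hxdef
  have hex : 0 < Real.exp ε := Real.exp_pos ε
  have hxe : Real.exp ε ≤ x := by rw [hxdef]; linarith
  have hx0 : 0 < x := lt_of_lt_of_le hex hxe
  have hcast : ((K - 1 : ℕ) : ℝ) = (K : ℝ) - 1 := by
    have : 1 ≤ K := by omega
    push_cast [Nat.cast_sub this]; ring
  have hexp : Real.exp (((K : ℝ) - 1) * ε) = (Real.exp ε) ^ (K - 1) := by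
    rw [← hcast, ← Real.exp_nat_mul]
  have hn : K - 1 = (K - 2) + 1 := by omega
  have key := aux_pow_sub_pow x (Real.exp ε) hex.le hxe (K - 2)
  have hcast2 : ((K - 2 : ℕ) : ℝ) + 1 = (K : ℝ) - 1 := by
    have : 2 ≤ K := hK
    push_cast [Nat.cast_sub this]; ring
  rw [← hn, hcast2] at key
  have hxsub : x - Real.exp ε = (N : ℝ) - 1 := by rw [hxdef]; ring
  rw [hxsub] at key
  -- key : x ^ (K-1) - exp ε ^ (K-1) ≤ ((K:ℝ)-1) * x ^ (K-2) * ((N:ℝ)-1)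
  have hden : 0 < ((N : ℝ) - 1) * x ^ (K - 1) := by
    apply mul_pos (by linarith) (pow_pos hx0 _)
  have hDval : D - 1 = (x ^ (K - 1) - (Real.exp ε) ^ (K - 1)) / (((N : ℝ) - 1) * x ^ (K - 1)) := by
    rw [hD, hexp]; ring
  have hpowsplit : x ^ (K - 1) = x ^ (K - 2) * x := by rw [hn, pow_succ]
  have hstep : D - 1 ≤ ((K : ℝ) - 1) / x := by
    rw [hDval, div_le_div_iff₀ hden hx0]
    calc (x ^ (K - 1) - Real.exp ε ^ (K - 1)) * x
        ≤ (((K : ℝ) - 1) * x ^ (K - 2) * ((N : ℝ) - 1)) * x :=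
          mul_le_mul_of_nonneg_right key hx0.le
      _ = ((K : ℝ) - 1) * (((N : ℝ) - 1) * x ^ (K - 1)) := by rw [hpowsplit]; ring
  have hDpos : 0 < D - 1 := by linarith
  have hfinal : Real.exp ε ≤ ((K : ℝ) - 1) / (D - 1) := by
    rw [le_div_iff₀ hDpos]
    have h1 : (D - 1) * x ≤ ((K : ℝ) - 1) / x * x := mul_le_mul_of_nonneg_right hstep hx0.le
    rw [div_mul_cancel₀ _ (ne_of_gt hx0)] at h1
    nlinarith
  have hfrac : 0 < ((K : ℝ) - 1) / (D - 1) := div_pos (by linarith) hDpos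
  have h2 : ε ≤ Real.log (((K : ℝ) - 1) / (D - 1)) :=
    (Real.le_log_iff_exp_le hfrac).mpr hfinal
  refine ⟨?_, h2⟩
  have hNne : (N : ℝ) - 1 ≠ 0 := by linarith
  have hDne : D - 1 ≠ 0 := ne_of_gt hDpos
  have hsimp : ((N : ℝ) - 1) / ((D - 1) * ((N : ℝ) - 1)) = 1 / (D - 1) := by
    field_simp
  rw [hsimp, ← Real.log_mul (by linarith : (K : ℝ) - 1 ≠ 0) (by positivity : (1 : ℝ) / (D - 1) ≠ 0)]
  have : ((K : ℝ) - 1) * (1 / (D - 1)) = ((K : ℝ) - 1) / (D - 1) := by ring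
  rw [this]
  exact h2
end

section
/- Let N ≥ 2, K ≥ 2 and ε ≥ 0, with α = (D^UB(ε)-1)(N-1) where D^UB(ε) = 1 + (N^(K-1)-1)/((N-1)(e^ε + N^(K-1) - 1)). Then (K-2)·log N + log((1-α)/α) ≤ ε ≤ (K-1)·log N + log((1-α)/α). -/
theorem epsilon_ub_two_sided (N K : ℕ) (hN : 2 ≤ N) (hK : 2 ≤ K) (ε : ℝ) (hε : 0 ≤ ε) :
    let D : ℝ := 1 + ((N : ℝ) ^ (K - 1) - 1) /
        (((N : ℝ) - 1) * (Real.exp ε + (N : ℝ) ^ (K - 1) - 1))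
    let α : ℝ := (D - 1) * ((N : ℝ) - 1)
    ((K : ℝ) - 2) * Real.log N + Real.log ((1 - α) / α) ≤ ε ∧
    ε ≤ ((K : ℝ) - 1) * Real.log N + Real.log ((1 - α) / α) := by
  intro D α
  have hN2 : (2:ℝ) ≤ (N:ℝ) := by exact_mod_cast hN
  have hN1 : (1:ℝ) < (N:ℝ) := by linarith
  set M : ℝ := (N:ℝ)^(K-1) with hM
  have hK1 : 1 ≤ K - 1 := by omega
  have hMge : (N:ℝ) ≤ M := by
    calc (N:ℝ) = (N:ℝ)^1 := (pow_one _).symm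
    _ ≤ M := pow_le_pow_right₀ hN1.le hK1
  have hE : 1 ≤ Real.exp ε := Real.one_le_exp hε
  have hNpos : (0:ℝ) < (N:ℝ) - 1 := by linarith
  have hden : (0:ℝ) < Real.exp ε + M - 1 := by linarith
  have hM1 : (0:ℝ) < M - 1 := by linarith
  have hα : α = (M - 1) / (Real.exp ε + M - 1) := by
    show (1 + (M - 1) / (((N:ℝ) - 1) * (Real.exp ε + M - 1)) - 1) * ((N:ℝ) - 1)
        = (M - 1) / (Real.exp ε + M - 1)
    field_simp
    ring
  have hratio : (1 - α) / α = Real.exp ε / (M - 1) := by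
    rw [hα]
    field_simp
    ring
  have hlog : Real.log ((1 - α) / α) = ε - Real.log (M - 1) := by
    rw [hratio, Real.log_div (Real.exp_ne_zero ε) hM1.ne', Real.log_exp]
  -- bounds on log (M - 1)
  have hcast : ((K - 1 : ℕ) : ℝ) = (K:ℝ) - 1 := by
    have : (1:ℕ) ≤ K := by omega
    push_cast [Nat.cast_sub this]; ring
  have hcast2 : ((K - 2 : ℕ) : ℝ) = (K:ℝ) - 2 := by
    push_cast [Nat.cast_sub hK]; ring
  have hub : Real.log (M - 1) ≤ ((K:ℝ) - 1) * Real.log N := by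
    have : Real.log (M - 1) ≤ Real.log M := Real.log_le_log hM1 (by linarith)
    rw [hM, Real.log_pow, hcast] at this
    exact this
  have hlb : ((K:ℝ) - 2) * Real.log N ≤ Real.log (M - 1) := by
    have hpow : (N:ℝ)^(K-2) ≤ M - 1 := by
      have hsucc : K - 1 = (K - 2) + 1 := by omega
      have hMeq : M = (N:ℝ)^(K-2) * (N:ℝ) := by rw [hM, hsucc, pow_succ]
      have h1 : (1:ℝ) ≤ (N:ℝ)^(K-2) := one_le_pow₀ hN1.le
      have h2 : (1:ℝ) * 1 ≤ (N:ℝ)^(K-2) * ((N:ℝ) - 1) :=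
        mul_le_mul h1 (by linarith) (by linarith) (by positivity)
      have h3 : M - (N:ℝ)^(K-2) = (N:ℝ)^(K-2) * ((N:ℝ) - 1) := by rw [hMeq]; ring
      linarith
    have : Real.log ((N:ℝ)^(K-2)) ≤ Real.log (M - 1) :=
      Real.log_le_log (by positivity) hpow
    rw [Real.log_pow, hcast2] at this
    exact this
  constructor <;> rw [hlog] <;> linarith
end

section
/- Let N ≥ 2, K ≥ 2 and ε ≥ 0. Then D^TSC(ε) ≤ D^UB(ε), where D^TSC(ε) = 1 + ((e^ε+N-1)^(K-1) - e^((K-1)ε))/((N-1)(e^ε+N-1)^(K-1)) and D^UB(ε) = 1 + (N^(K-1)-1)/((N-1)(e^ε + N^(K-1) - 1)). -/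
lemma key_pow_ineq (m : ℕ) (a b : ℝ) (ha : 1 ≤ a) (hb : 0 ≤ b) :
    a * (a + b) ^ m ≤ a ^ m * (a + (1 + b) ^ m - 1) := by
  induction m with
  | zero => simp
  | succ m ih =>
    have hc : (1:ℝ) ≤ (1 + b) ^ m := one_le_pow₀ (by linarith)
    have hap : (0:ℝ) ≤ a ^ m := by positivity
    calc a * (a + b) ^ (m + 1) = (a * (a + b) ^ m) * (a + b) := by ring
      _ ≤ (a ^ m * (a + (1 + b) ^ m - 1)) * (a + b) :=
          mul_le_mul_of_nonneg_right ih (by linarith)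
      _ ≤ a ^ (m + 1) * (a + (1 + b) ^ (m + 1) - 1) := by
          rw [pow_succ, pow_succ]
          nlinarith [mul_nonneg hap (mul_nonneg (mul_nonneg hb (sub_nonneg.2 ha))
            (sub_nonneg.2 hc))]

theorem dtsc_le_dub (N K : ℕ) (hN : 2 ≤ N) (hK : 2 ≤ K) (ε : ℝ) (hε : 0 ≤ ε) :
    1 + ((Real.exp ε + N - 1) ^ (K - 1) - Real.exp (((K : ℝ) - 1) * ε)) /
        (((N : ℝ) - 1) * (Real.exp ε + N - 1) ^ (K - 1)) ≤
    1 + ((N : ℝ) ^ (K - 1) - 1) /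
        (((N : ℝ) - 1) * (Real.exp ε + (N : ℝ) ^ (K - 1) - 1)) := by
  have hN1 : (2:ℝ) ≤ (N:ℝ) := by exact_mod_cast hN
  set m := K - 1 with hm
  have hKm : ((K:ℝ) - 1) = (m:ℝ) := by
    have : K = m + 1 := by omega
    rw [this]; push_cast; ring
  rw [show ((K:ℝ) - 1) * ε = (m:ℝ) * ε from by rw [hKm], Real.exp_nat_mul]
  set a := Real.exp ε with ha_def
  have ha : 1 ≤ a := Real.one_le_exp hε
  have key' := key_pow_ineq m a ((N:ℝ) - 1) ha (by linarith)
  rw [show (1:ℝ) + ((N:ℝ) - 1) = (N:ℝ) from by ring,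
      show a + ((N:ℝ) - 1) = a + (N:ℝ) - 1 from by ring] at key'
  have h1 : (0:ℝ) < (N:ℝ) - 1 := by linarith
  have h2 : (0:ℝ) < (a + (N:ℝ) - 1) ^ m := pow_pos (by linarith) m
  have hNm : (1:ℝ) ≤ (N:ℝ) ^ m := one_le_pow₀ (by linarith)
  have h3 : (0:ℝ) < a + (N:ℝ) ^ m - 1 := by linarith
  apply add_le_add_right
  rw [div_le_div_iff₀ (by positivity) (by positivity)]
  nlinarith [mul_nonneg h1.le (sub_nonneg.2 key')]
end

section
/- Let N ≥ 2, K ≥ 2 and ε ≥ 0. Then D^LB(ε) ≤ D^TSC(ε), where D^LB(ε) = Σ_{i=0}^{K-1} (N·e^ε)^(-i) and D^TSC(ε) = 1 + ((e^ε+N-1)^(K-1) - e^((K-1)ε))/((N-1)(e^ε+N-1)^(K-1)). -/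
lemma dlb_aux (n E : ℝ) (hn : 2 ≤ n) (hE : 1 ≤ E) (m : ℕ) :
    ∑ i ∈ Finset.range (m+1), (1/(n*E))^i ≤
      1 + ((E+n-1)^m - E^m)/((n-1)*(E+n-1)^m) := by
  have ha0 : 0 < E + n - 1 := by linarith
  have hnE : 0 < n * E := by nlinarith
  have hn1 : (0:ℝ) < n - 1 := by linarith
  induction m with
  | zero => simp
  | succ m ih =>
    rw [Finset.sum_range_succ]
    have hA : 0 < (E+n-1)^m := pow_pos ha0 m
    have hP : 0 < (n*E)^(m+1) := pow_pos hnE (m+1)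
    have hEm : (1:ℝ) ≤ E^m := one_le_pow₀ hE
    have key : (E+n-1) * (E+n-1)^m ≤ E^m * (n*E)^(m+1) := by
      calc (E+n-1) * (E+n-1)^m = (E+n-1)^(m+1) := (pow_succ' _ _).symm
        _ ≤ (n*E)^(m+1) := by
            apply pow_le_pow_left₀ ha0.le
            nlinarith
        _ ≤ E^m * (n*E)^(m+1) := le_mul_of_one_le_left hP.le hEm
    have step : (1/(n*E))^(m+1) + ((E+n-1)^m - E^m)/((n-1)*(E+n-1)^m) ≤
        ((E+n-1)^(m+1) - E^(m+1))/((n-1)*(E+n-1)^(m+1)) := by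
      rw [one_div, inv_pow, ← one_div, pow_succ' (E+n-1), pow_succ' E]
      generalize (E+n-1)^m = A at *
      generalize (n*E)^(m+1) = P at *
      generalize E^m = Em at *
      rw [div_add_div _ _ hP.ne' (by positivity), div_le_div_iff₀ (by positivity) (by positivity)]
      nlinarith [mul_le_mul_of_nonneg_right key (by positivity : (0:ℝ) ≤ (n-1)^2 * A), hA.le, hP.le, hEm]
    linarith

theorem dlb_le_dtsc (N K : ℕ) (hN : 2 ≤ N) (hK : 2 ≤ K) (ε : ℝ) (hε : 0 ≤ ε) :
    ∑ i ∈ Finset.range K, (1 / ((N : ℝ) * Real.exp ε)) ^ i ≤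
    1 + ((Real.exp ε + N - 1) ^ (K - 1) - Real.exp (((K : ℝ) - 1) * ε)) /
        (((N : ℝ) - 1) * (Real.exp ε + N - 1) ^ (K - 1)) := by
  have hn : (2:ℝ) ≤ (N:ℝ) := by exact_mod_cast hN
  have hE : 1 ≤ Real.exp ε := Real.one_le_exp hε
  have hKe : Real.exp (((K:ℝ) - 1) * ε) = (Real.exp ε) ^ (K - 1) := by
    have h1 : ((K:ℝ) - 1) = ((K - 1 : ℕ) : ℝ) := by
      have : 1 ≤ K := by omega
      push_cast [this]
      ring
    rw [h1, Real.exp_nat_mul]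
  rw [hKe]
  have hK1 : K - 1 + 1 = K := by omega
  have := dlb_aux (N:ℝ) (Real.exp ε) hn hE (K - 1)
  rwa [hK1] at this
end
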